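/- Let U ⊆ ℂ be a bounded connected open set, and let W_n, W ⊆ U be connected open sets with 0 ∈ W_n for all n and 0 ∈ W. Assume (W_n) converges to W in the kernel sense and that the set F associated to (W_n) and W is empty. Then η_{W_n}(p) → η_W(p) for every p ∈ W. (This is Theorem 1.4 of the paper for the trivial single-leaf nonsingular foliation of U, for which the singular set E and the defective set S are empty; the bounded plane domain W is automatically taut.) -/

import Mathlib

/-! Lower semicontinuity: restricting a competitor `f : 𝔻 → W₀` to a smaller disc gives a compact
image, which lies in `W n` for all large `n` by kernel convergence; rescaling costs only a factor
`ρ < 1` in `|f'(0)|`.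

Upper semicontinuity: competitors for a subsequence of the uniformly bounded `W n` have, by
Montel's theorem, a locally uniformly convergent subsequence with limit `F`. By Hurwitz's
theorem a fixed ball around each value of a nonconstant `F` is eventually covered by the
competitors, hence lies in the `W n`; as the kernel of every subsequence is `W₀`, connectedness
of the disc gives `F(𝔻) ⊆ W₀`, so `|F'(0)| ≤ η_{W₀}(p)`. -/

open Filter Metric Topology Set

/-- The kernel of a sequence of open sets: the union over `n` of the connected
component containing `0` of the interior of `⋂ k ≥ n, W k`. -/
def seqKernel {X : Type*} [TopologicalSpace X] [Zero X] (W : ℕ → Set X) : Set X :=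
  ⋃ n, connectedComponentIn (interior (⋂ k, ⋂ (_ : n ≤ k), W k)) 0

/-- The set `F` associated to a sequence `(W n)` and a limit set `W₀`: points
outside `closure W₀` that are limits of points `p k ∈ W (n k) \ closure W₀`
along a strictly increasing sequence of indices. -/
def Fset {X : Type*} [TopologicalSpace X] (W : ℕ → Set X) (W₀ : Set X) : Set X :=
  {p | p ∉ closure W₀ ∧ ∃ nk : ℕ → ℕ, StrictMono nk ∧ ∃ pk : ℕ → X,
    (∀ k, pk k ∈ W (nk k) \ closure W₀) ∧ Tendsto pk atTop (nhds p)}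

/-- The modulus-of-uniformization function of a plane domain `Ω` (for the trivial
single-leaf foliation): the supremum of `|f'(0)|` over holomorphic maps
`f : 𝔻 → Ω` with `f 0 = p` (with `sSup ∅ = 0`). -/
noncomputable def eta (Ω : Set ℂ) (p : ℂ) : ℝ :=
  sSup {r : ℝ | ∃ f : ℂ → ℂ, DifferentiableOn ℂ f (ball (0 : ℂ) 1) ∧ f 0 = p ∧
    (∀ z ∈ ball (0 : ℂ) 1, f z ∈ Ω) ∧ r = ‖deriv f 0‖}

section Kernel

variable {X : Type*} [TopologicalSpace X] [Zero X] {W : ℕ → Set X}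

def seqKernelPiece (W : ℕ → Set X) (n : ℕ) : Set X :=
  connectedComponentIn (interior (⋂ k, ⋂ (_ : n ≤ k), W k)) 0

theorem isOpen_seqKernelPiece [LocallyConnectedSpace X] (n : ℕ) : IsOpen (seqKernelPiece W n) :=
  isOpen_interior.connectedComponentIn

theorem seqKernelPiece_mono : Monotone (seqKernelPiece W) := fun _ _ hab =>
  connectedComponentIn_mono _ <| interior_mono <|
    iInter₂_mono' fun k hk => ⟨k, hab.trans hk, subset_rfl⟩

theorem seqKernelPiece_subset {n m : ℕ} (h : n ≤ m) : seqKernelPiece W n ⊆ W m :=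
  (connectedComponentIn_subset _ _).trans <| interior_subset.trans <| iInter₂_subset m h

theorem isOpen_seqKernel [LocallyConnectedSpace X] : IsOpen (seqKernel W) :=
  isOpen_iUnion fun _ => isOpen_seqKernelPiece _

theorem seqKernel_subset_iUnion : seqKernel W ⊆ ⋃ n, W n :=
  iUnion_mono fun _ => seqKernelPiece_subset le_rfl

theorem IsCompact.eventually_subset_of_subset_seqKernel [LocallyConnectedSpace X] {K : Set X}
    (hK : IsCompact K) (hKW : K ⊆ seqKernel W) : ∀ᶠ m in atTop, K ⊆ W m := by
  obtain ⟨N, hN⟩ := hK.elim_directed_cover (seqKernelPiece W) isOpen_seqKernelPiece hKW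
    seqKernelPiece_mono.directed_le
  filter_upwards [eventually_ge_atTop N] with m hm using hN.trans (seqKernelPiece_subset hm)

theorem IsPreconnected.subset_seqKernel {V : Set X} (hV : IsPreconnected V) (hVo : IsOpen V)
    (hVW : ∀ᶠ m in atTop, V ⊆ W m) (hVk : (V ∩ seqKernel W).Nonempty) : V ⊆ seqKernel W := by
  obtain ⟨q, hqV, hqk⟩ := hVk
  obtain ⟨N', hqN'⟩ := mem_iUnion.mp hqk
  obtain ⟨N, hN⟩ := eventually_atTop.mp hVW
  have hVI : V ⊆ interior (⋂ k, ⋂ (_ : max N N' ≤ k), W k) :=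
    hVo.subset_interior_iff.mpr <| subset_iInter₂ fun k hk => hN k (le_of_max_le_left hk)
  have hq : q ∈ seqKernelPiece W (max N N') := seqKernelPiece_mono (le_max_right N N') hqN'
  refine (hV.subset_connectedComponentIn hqV hVI).trans ?_
  rw [← connectedComponentIn_eq hq]
  exact subset_iUnion (seqKernelPiece W) _

end Kernel

def etaSet (Ω : Set ℂ) (p : ℂ) : Set ℝ :=
  {r : ℝ | ∃ f : ℂ → ℂ, DifferentiableOn ℂ f (ball (0 : ℂ) 1) ∧ f 0 = p ∧
    (∀ z ∈ ball (0 : ℂ) 1, f z ∈ Ω) ∧ r = ‖deriv f 0‖}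

theorem eta_eq_sSup (Ω : Set ℂ) (p : ℂ) : eta Ω p = sSup (etaSet Ω p) := rfl

section Eta

variable {Ω : Set ℂ} {p : ℂ}

theorem bddAbove_etaSet (hΩ : Bornology.IsBounded Ω) (p : ℂ) : BddAbove (etaSet Ω p) := by
  obtain ⟨R, hR⟩ := hΩ.subset_closedBall p
  refine ⟨R, ?_⟩
  rintro _ ⟨f, hf, rfl, hfΩ, rfl⟩
  simpa using Complex.norm_deriv_le_div_of_mapsTo_ball hf (fun z hz => hR (hfΩ z hz)) one_pos

theorem le_eta (hΩ : Bornology.IsBounded Ω) {r : ℝ} (hr : r ∈ etaSet Ω p) : r ≤ eta Ω p :=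
  le_csSup (bddAbove_etaSet hΩ p) hr

theorem zero_mem_etaSet (hp : p ∈ Ω) : 0 ∈ etaSet Ω p :=
  ⟨fun _ => p, differentiableOn_const p, rfl, fun _ _ => hp, by simp⟩

theorem eta_nonneg (hΩ : Bornology.IsBounded Ω) (hp : p ∈ Ω) : 0 ≤ eta Ω p :=
  le_eta hΩ (zero_mem_etaSet hp)

theorem exists_lt_norm_deriv_of_lt_eta {t : ℝ} (ht₀ : 0 ≤ t) (ht : t < eta Ω p) :
    ∃ f : ℂ → ℂ, DifferentiableOn ℂ f (ball 0 1) ∧ f 0 = p ∧ MapsTo f (ball 0 1) Ω ∧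
      t < ‖deriv f 0‖ := by
  have hne : (etaSet Ω p).Nonempty := by
    by_contra h
    rw [not_nonempty_iff_eq_empty] at h
    rw [eta_eq_sSup, h, Real.sSup_empty] at ht
    linarith
  obtain ⟨_, ⟨f, hf, hf0, hfΩ, rfl⟩, htf⟩ := exists_lt_of_lt_csSup hne ht
  exact ⟨f, hf, hf0, hfΩ, htf⟩

theorem mul_norm_deriv_mem_etaSet {f : ℂ → ℂ} (hf : DifferentiableOn ℂ f (ball 0 1))
    (hf0 : f 0 = p) {ρ : ℝ} (hρ₀ : 0 < ρ) (hρ₁ : ρ ≤ 1) (hfΩ : MapsTo f (ball 0 ρ) Ω) :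
    ρ * ‖deriv f 0‖ ∈ etaSet Ω p := by
  have hscale : MapsTo (fun z : ℂ => (ρ : ℂ) * z) (ball 0 1) (ball 0 ρ) := fun z hz => by
    simpa [norm_mul, abs_of_pos hρ₀] using mul_lt_mul_of_pos_left (mem_ball_zero_iff.mp hz) hρ₀
  refine ⟨fun z => f (ρ * z), ?_, by simpa using hf0, fun z hz => hfΩ (hscale hz), ?_⟩
  · exact hf.comp (differentiableOn_id.const_mul _) (hscale.mono_right (ball_subset_ball hρ₁))
  · rw [deriv_comp_mul_left]
    simp [abs_of_pos hρ₀]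

end Eta

theorem eventually_lt_eta {W : ℕ → Set ℂ} (hW : ∀ n, Bornology.IsBounded (W n)) {p : ℂ}
    (hp : p ∈ seqKernel W) {t : ℝ} (ht : t < eta (seqKernel W) p) :
    ∀ᶠ n in atTop, t < eta (W n) p := by
  rcases lt_or_ge t 0 with ht₀ | ht₀
  · filter_upwards [isCompact_singleton.eventually_subset_of_subset_seqKernel
      (singleton_subset_iff.mpr hp)] with n hn
    exact ht₀.trans_le (eta_nonneg (hW n) (hn rfl))
  obtain ⟨f, hf, hf0, hfW, htf⟩ := exists_lt_norm_deriv_of_lt_eta ht₀ ht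
  set a := ‖deriv f 0‖
  have ha : 0 < a := ht₀.trans_lt htf
  obtain ⟨ρ, htρ, hρ₁⟩ := exists_between ((div_lt_one ha).mpr htf)
  have hρ₀ : 0 < ρ := (div_nonneg ht₀ ha.le).trans_lt htρ
  have hK : IsCompact (f '' closedBall 0 ρ) :=
    (isCompact_closedBall 0 ρ).image_of_continuousOn
      (hf.continuousOn.mono (closedBall_subset_ball hρ₁))
  have hKW : f '' closedBall 0 ρ ⊆ seqKernel W :=
    image_subset_iff.mpr fun z hz => hfW (closedBall_subset_ball hρ₁ hz)
  filter_upwards [hK.eventually_subset_of_subset_seqKernel hKW] with n hn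
  have hmem := mul_norm_deriv_mem_etaSet hf hf0 hρ₀ hρ₁.le
    (fun z hz => hn (mem_image_of_mem f (ball_subset_closedBall hz)))
  exact ((div_lt_iff₀ ha).mp htρ).trans_le (le_eta (hW n) hmem)

section Montel

theorem cauchySeq_of_equicontinuousAt_of_mem_closure {X α : Type*} [TopologicalSpace X]
    [PseudoMetricSpace α] {f : ℕ → X → α} {D : Set X} {x : X} (hf : EquicontinuousAt f x)
    (hD : ∀ y ∈ D, CauchySeq (f · y)) (hx : x ∈ closure D) : CauchySeq (f · x) := by
  rw [Metric.cauchySeq_iff]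
  intro ε hε
  obtain ⟨y, hxy, hyD⟩ := mem_closure_iff_nhds.mp hx _
    (Metric.equicontinuousAt_iff_right.mp hf (ε / 3) (by positivity))
  obtain ⟨N, hN⟩ := Metric.cauchySeq_iff.mp (hD y hyD) (ε / 3) (by positivity)
  refine ⟨N, fun m hm n hn => ?_⟩
  calc dist (f m x) (f n x) ≤ dist (f m x) (f m y) + dist (f m y) (f n y) + dist (f n y) (f n x) :=
        dist_triangle4 _ _ _ _
    _ < ε / 3 + ε / 3 + ε / 3 := by
        gcongr
        exacts [hxy m, hN m hm n hn, dist_comm (f n x) (f n y) ▸ hxy n]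
    _ = ε := by ring

theorem tendstoLocallyUniformlyOn_of_equicontinuousAt {ι X α : Type*} [TopologicalSpace X]
    [PseudoMetricSpace α] {l : Filter ι} [l.NeBot] {f : ι → X → α} {F : X → α} {U : Set X}
    (hf : ∀ x ∈ U, EquicontinuousAt f x) (hF : ∀ x ∈ U, Tendsto (f · x) l (𝓝 (F x))) :
    TendstoLocallyUniformlyOn f F l U := by
  rw [Metric.tendstoLocallyUniformlyOn_iff]
  intro ε hε x hx
  have hV := Metric.equicontinuousAt_iff_right.mp (hf x hx) (ε / 3) (by positivity)
  refine ⟨U ∩ {y | ∀ i, dist (f i x) (f i y) < ε / 3}, inter_mem_nhdsWithin U hV, ?_⟩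
  filter_upwards [Metric.tendsto_nhds.mp (hF x hx) (ε / 3) (by positivity)] with n hn y hy
  have hFxy : dist (F x) (F y) ≤ ε / 3 :=
    le_of_tendsto ((hF x hx).dist (hF y hy.1)) (.of_forall fun i => (hy.2 i).le)
  linarith [dist_triangle4 (F y) (F x) (f n x) (f n y), dist_comm (F x) (F y),
    dist_comm (f n x) (F x), hy.2 n]

theorem exists_strictMono_forall_cauchySeq {X α : Type*} [PseudoMetricSpace α]
    {f : ℕ → X → α} {D : Set X} (hD : D.Countable) {K : Set α} (hK : IsCompact K)
    (hfK : ∀ k, ∀ x ∈ D, f k x ∈ K) :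
    ∃ φ : ℕ → ℕ, StrictMono φ ∧ ∀ x ∈ D, CauchySeq fun k => f (φ k) x := by
  have := hD.to_subtype
  obtain ⟨g, -, φ, hφ, hg⟩ := (isCompact_univ_pi fun _ : D => hK).tendsto_subseq
    (x := fun k (x : D) => f k x) fun k x _ => hfK k x x.2
  exact ⟨φ, hφ, fun x hx => (tendsto_pi_nhds.mp hg ⟨x, hx⟩).cauchySeq⟩

variable {E : Type*} [NormedAddCommGroup E] [NormedSpace ℂ E] {U : Set ℂ} {c : E} {R : ℝ}

theorem equicontinuousAt_of_mapsTo_closedBall {ι : Type*} {f : ι → ℂ → E} (hU : IsOpen U)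
    (hf : ∀ i, DifferentiableOn ℂ (f i) U) (hfU : ∀ i, MapsTo (f i) U (closedBall c R))
    {z : ℂ} (hz : z ∈ U) : EquicontinuousAt f z := by
  obtain ⟨r, hr, hrU⟩ := Metric.isOpen_iff.mp hU z hz
  refine Metric.equicontinuousAt_of_continuity_modulus (fun x => 2 * R / r * dist x z) ?_ f ?_
  · simpa using ((continuous_id.dist (continuous_const (y := z))).const_mul (2 * R / r)).tendsto z
  filter_upwards [ball_mem_nhds z hr] with x hx i
  rw [dist_comm]
  refine Complex.dist_le_div_mul_dist_of_mapsTo_ball ((hf i).mono hrU) (fun y hy => ?_) hx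
  have hy := mem_closedBall.mp (hfU i (hrU hy))
  have hz := mem_closedBall'.mp (hfU i hz)
  exact mem_closedBall.mpr ((dist_triangle _ c _).trans (by linarith))

theorem exists_strictMono_tendstoLocallyUniformlyOn [ProperSpace E] {f : ℕ → ℂ → E}
    (hU : IsOpen U) (hf : ∀ k, DifferentiableOn ℂ (f k) U)
    (hfU : ∀ k, MapsTo (f k) U (closedBall c R)) :
    ∃ φ : ℕ → ℕ, StrictMono φ ∧ ∃ F : ℂ → E,
      TendstoLocallyUniformlyOn (fun k => f (φ k)) F atTop U := by
  obtain ⟨D, hDU, hDc, hUD⟩ :=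
    (TopologicalSpace.IsSeparable.of_separableSpace U).exists_countable_dense_subset
  obtain ⟨φ, hφ, hφD⟩ := exists_strictMono_forall_cauchySeq hDc (isCompact_closedBall c R)
    fun k x hx => hfU k (hDU hx)
  have heq : ∀ z ∈ U, EquicontinuousAt (fun k => f (φ k)) z := fun z hz =>
    equicontinuousAt_of_mapsTo_closedBall hU (fun k => hf (φ k)) (fun k => hfU (φ k)) hz
  have hcauchy : ∀ z ∈ U, CauchySeq fun k => f (φ k) z := fun z hz =>
    cauchySeq_of_equicontinuousAt_of_mem_closure (heq z hz) hφD (hUD hz)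
  exact ⟨φ, hφ, fun z => limUnder atTop fun k => f (φ k) z,
    tendstoLocallyUniformlyOn_of_equicontinuousAt heq fun z hz => (hcauchy z hz).tendsto_limUnder⟩

end Montel

section Hurwitz

variable {U : Set ℂ} {f : ℕ → ℂ → ℂ} {F : ℂ → ℂ}

theorem exists_pos_sphere_ne_of_not_eventually_eq (hU : IsOpen U)
    (hF : DifferentiableOn ℂ F U) {z₀ : ℂ} (hz₀ : z₀ ∈ U) (hF₀ : ¬∀ᶠ z in 𝓝 z₀, F z = F z₀) :
    ∃ r > 0, ball z₀ (2 * r) ⊆ U ∧ ∀ w ∈ sphere z₀ r, F w ≠ F z₀ := by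
  have hne : ∀ᶠ z in 𝓝[≠] z₀, F z ≠ F z₀ :=
    ((hF.analyticAt (hU.mem_nhds hz₀)).eventually_eq_or_eventually_ne
      analyticAt_const).resolve_left hF₀
  obtain ⟨s, hs, hsU⟩ := Metric.isOpen_iff.mp hU z₀ hz₀
  obtain ⟨s', hs', hs'F⟩ := Metric.mem_nhdsWithin_iff.mp hne
  have hr : 0 < min s s' / 2 := by positivity
  refine ⟨min s s' / 2, hr, (ball_subset_ball (by linarith [min_le_left s s'])).trans hsU,
    fun w hw => hs'F ⟨?_, ne_of_mem_sphere hw hr.ne'⟩⟩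
  rw [mem_ball, mem_sphere.mp hw]
  linarith [min_le_right s s']

theorem eventually_ball_subset_image_of_tendstoLocallyUniformlyOn (hU : IsOpen U)
    (hf : ∀ k, DifferentiableOn ℂ (f k) U) (hfF : TendstoLocallyUniformlyOn f F atTop U)
    {z₀ : ℂ} (hz₀ : z₀ ∈ U) (hF₀ : ¬∀ᶠ z in 𝓝 z₀, F z = F z₀) :
    ∃ δ > 0, ∀ᶠ k in atTop, ball (F z₀) δ ⊆ f k '' U := by
  have hF : DifferentiableOn ℂ F U := hfF.differentiableOn (.of_forall hf) hU
  obtain ⟨r, hr, hrU, hrF⟩ := exists_pos_sphere_ne_of_not_eventually_eq hU hF hz₀ hF₀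
  have hcU : closedBall z₀ r ⊆ U := (closedBall_subset_ball (by linarith)).trans hrU
  obtain ⟨w₀, hw₀, hmin⟩ := (isCompact_sphere z₀ r).exists_isMinOn
    (NormedSpace.sphere_nonempty.mpr hr.le) (continuous_norm.comp_continuousOn
      ((hF.continuousOn.mono (sphere_subset_closedBall.trans hcU)).sub continuousOn_const))
  set ε := ‖F w₀ - F z₀‖
  have hε : 0 < ε := norm_sub_pos_iff.mpr (hrF w₀ hw₀)
  have hunif : ∀ᶠ k in atTop, ∀ x ∈ closedBall z₀ r, dist (F x) (f k x) < ε / 8 :=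
    Metric.tendstoUniformlyOn_iff.mp ((tendstoLocallyUniformlyOn_iff_forall_isCompact hU).mp
      hfF _ hcU (isCompact_closedBall z₀ r)) _ (by positivity)
  refine ⟨ε / 8, by positivity, ?_⟩
  filter_upwards [hunif] with k hk
  have hz₀k := hk z₀ (mem_closedBall_self hr.le)
  have hsph : ∀ w ∈ sphere z₀ r, ε / 2 ≤ ‖f k w - f k z₀‖ := fun w hw => by
    have hw' := hk w (sphere_subset_closedBall hw)
    have hFw : ε ≤ ‖F w - F z₀‖ := hmin hw
    rw [← dist_eq_norm] at hFw ⊢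
    linarith [dist_triangle4 (F w) (f k w) (f k z₀) (F z₀), dist_comm (F z₀) (f k z₀)]
  -- by the identity theorem on `ball z₀ (2 * r)`, `f k` would otherwise be constant on the sphere
  have hnc : ∃ᶠ z in 𝓝 z₀, f k z ≠ f k z₀ := fun hconst => by
    have heq := (((hf k).mono hrU).analyticOnNhd isOpen_ball).eqOn_of_preconnected_of_eventuallyEq
      analyticOnNhd_const (convex_ball z₀ _).isPreconnected (mem_ball_self (by positivity))
      (hconst.mono fun z hz => not_not.mp hz)
    have hw₀ball : w₀ ∈ ball z₀ (2 * r) := by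
      rw [mem_ball, mem_sphere.mp hw₀]; linarith
    have := hsph w₀ hw₀
    rw [heq hw₀ball, sub_self, norm_zero] at this
    linarith
  have himg := ((hf k).diffContOnCl_ball hcU).ball_subset_image_closedBall hr hsph hnc
  refine (ball_subset_ball' ?_).trans (himg.trans (image_mono hcU))
  linarith [dist_comm (F z₀) (f k z₀)]

end Hurwitz

theorem mapsTo_seqKernel_of_tendstoLocallyUniformlyOn {U : Set ℂ} {f : ℕ → ℂ → ℂ} {F : ℂ → ℂ}
    {W : ℕ → Set ℂ} (hU : IsOpen U) (hUc : IsPreconnected U)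
    (hf : ∀ k, DifferentiableOn ℂ (f k) U) (hfW : ∀ k, MapsTo (f k) U (W k))
    (hfF : TendstoLocallyUniformlyOn f F atTop U) (hF₀ : ∀ z ∈ U, ¬∀ᶠ w in 𝓝 z, F w = F z)
    {z₀ : ℂ} (hz₀ : z₀ ∈ U) (hFz₀ : F z₀ ∈ seqKernel W) : MapsTo F U (seqKernel W) := by
  have hF : ContinuousOn F U := (hfF.differentiableOn (.of_forall hf) hU).continuousOn
  suffices hUA : U ⊆ U ∩ F ⁻¹' seqKernel W from fun z hz => (hUA hz).2
  refine hUc.subset_of_closure_inter_subset (hF.isOpen_inter_preimage hU isOpen_seqKernel)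
    ⟨z₀, hz₀, hz₀, hFz₀⟩ ?_
  rintro z ⟨hzA, hz⟩
  obtain ⟨δ, hδ, hball⟩ :=
    eventually_ball_subset_image_of_tendstoLocallyUniformlyOn hU hf hfF hz (hF₀ z hz)
  obtain ⟨z₁, hz₁, hz₁A⟩ := mem_closure_iff_nhds.mp hzA _
    ((hF.continuousAt (hU.mem_nhds hz)).preimage_mem_nhds (ball_mem_nhds _ hδ))
  have hV : ball (F z) δ ⊆ seqKernel W :=
    (convex_ball _ _).isPreconnected.subset_seqKernel isOpen_ball
      (hball.mono fun k hk => hk.trans (hfW k).image_subset) ⟨F z₁, hz₁, hz₁A.2⟩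
  exact ⟨hz, hV (mem_ball_self hδ)⟩

theorem norm_deriv_mem_etaSet_seqKernel {f : ℕ → ℂ → ℂ} {F : ℂ → ℂ} {W : ℕ → Set ℂ} {p : ℂ}
    (hp : p ∈ seqKernel W) (hf : ∀ k, DifferentiableOn ℂ (f k) (ball 0 1))
    (hf0 : ∀ k, f k 0 = p) (hfW : ∀ k, MapsTo (f k) (ball 0 1) (W k))
    (hfF : TendstoLocallyUniformlyOn f F atTop (ball 0 1)) :
    ‖deriv F 0‖ ∈ etaSet (seqKernel W) p := by
  have hF : DifferentiableOn ℂ F (ball 0 1) := hfF.differentiableOn (.of_forall hf) isOpen_ball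
  have hF0 : F 0 = p :=
    tendsto_nhds_unique (hfF.tendsto_at (mem_ball_self one_pos)) (by simp [hf0])
  refine ⟨F, hF, hF0, ?_, rfl⟩
  by_cases hconst : ∃ z ∈ ball (0 : ℂ) 1, ∀ᶠ w in 𝓝 z, F w = F z
  · obtain ⟨z, hz, hFz⟩ := hconst
    have heq := (hF.analyticOnNhd isOpen_ball).eqOn_of_preconnected_of_eventuallyEq
      analyticOnNhd_const (convex_ball _ _).isPreconnected hz hFz
    intro w hw
    rwa [heq hw, ← heq (mem_ball_self one_pos), hF0]
  · simp only [not_exists, not_and] at hconst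
    exact mapsTo_seqKernel_of_tendstoLocallyUniformlyOn isOpen_ball
      (convex_ball _ _).isPreconnected hf hfW hfF hconst (mem_ball_self one_pos) (hF0 ▸ hp)

theorem eventually_eta_lt {U : Set ℂ} (hU : Bornology.IsBounded U) {W : ℕ → Set ℂ}
    (hWU : ∀ n, W n ⊆ U) {W₀ : Set ℂ}
    (hsub : ∀ σ : ℕ → ℕ, StrictMono σ → seqKernel (fun k => W (σ k)) = W₀) {p : ℂ}
    (hp : p ∈ W₀) {t : ℝ} (ht : eta W₀ p < t) : ∀ᶠ n in atTop, eta (W n) p < t := by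
  have hW₀ : Bornology.IsBounded W₀ :=
    hU.subset (hsub id strictMono_id ▸ seqKernel_subset_iUnion.trans (iUnion_subset hWU))
  obtain ⟨t', ht', ht't⟩ := exists_between ht
  by_contra hfreq
  obtain ⟨σ, hσ, hσt⟩ :=
    extraction_of_frequently_atTop (not_eventually.mp hfreq |>.mono fun n hn => not_lt.mp hn)
  choose f hf hf0 hfW hft' using fun k =>
    exists_lt_norm_deriv_of_lt_eta ((eta_nonneg hW₀ hp).trans ht'.le) (ht't.trans_le (hσt k))
  obtain ⟨R, hR⟩ := hU.subset_closedBall 0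
  obtain ⟨φ, hφ, F, hfF⟩ := exists_strictMono_tendstoLocallyUniformlyOn isOpen_ball
    hf fun k z hz => hR (hWU _ (hfW k hz))
  have hker := hsub _ (hσ.comp hφ)
  have hmem : ‖deriv F 0‖ ∈ etaSet W₀ p := hker ▸ norm_deriv_mem_etaSet_seqKernel (hker ▸ hp)
    (fun k => hf (φ k)) (fun k => hf0 (φ k)) (fun k => hfW (φ k)) hfF
  have hderiv : Tendsto (fun k => ‖deriv (f (φ k)) 0‖) atTop (𝓝 ‖deriv F 0‖) :=
    ((hfF.deriv (.of_forall fun k => hf (φ k)) isOpen_ball).tendsto_at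
      (mem_ball_self one_pos)).norm
  have hlim : t' ≤ ‖deriv F 0‖ := ge_of_tendsto hderiv (.of_forall fun k => (hft' (φ k)).le)
  linarith [le_eta hW₀ hmem]

theorem eta_pointwise_convergence_of_kernel_convergence_general
    (U : Set ℂ)
    (hUbdd : Bornology.IsBounded U)
    (W : ℕ → Set ℂ) (W₀ : Set ℂ)
    (hWU : ∀ n, W n ⊆ U)
    (hsub : ∀ σ : ℕ → ℕ, StrictMono σ → seqKernel (fun k => W (σ k)) = W₀) :
    ∀ p ∈ W₀, Tendsto (fun n => eta (W n) p) atTop (nhds (eta W₀ p)) := by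
  intro p hp
  have hker : seqKernel W = W₀ := hsub id strictMono_id
  subst hker
  exact tendsto_order.2 ⟨fun t ht => eventually_lt_eta (fun n => hUbdd.subset (hWU n)) hp ht,
    fun t ht => eventually_eta_lt hUbdd hWU hsub hp ht⟩

/-- Theorem 1.4 for the trivial single-leaf foliation of a bounded plane domain
`U`: if `(W n)` converges to `W₀` in the kernel sense and `F = ∅`, then
`η_{W n} p → η_{W₀} p` for every `p ∈ W₀`. -/
theorem eta_pointwise_convergence_of_kernel_convergence
    (U : Set ℂ) (hUopen : IsOpen U) (hUconn : IsConnected U)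
    (hUbdd : Bornology.IsBounded U)
    (W : ℕ → Set ℂ) (W₀ : Set ℂ)
    (hWopen : ∀ n, IsOpen (W n)) (hWconn : ∀ n, IsConnected (W n))
    (hWU : ∀ n, W n ⊆ U) (h0 : ∀ n, (0 : ℂ) ∈ W n)
    (hW₀open : IsOpen W₀) (hW₀conn : IsConnected W₀) (hW₀U : W₀ ⊆ U)
    (h0W₀ : (0 : ℂ) ∈ W₀)
    (hker : seqKernel W = W₀)
    (hsub : ∀ σ : ℕ → ℕ, StrictMono σ → seqKernel (fun k => W (σ k)) = W₀)
    (hF : Fset W W₀ = ∅) :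
    ∀ p ∈ W₀, Tendsto (fun n => eta (W n) p) atTop (nhds (eta W₀ p)) :=
  eta_pointwise_convergence_of_kernel_convergence_general U hUbdd W W₀ hWU hsub
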